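/- The function υ(t) = t·φ(t)/(φ(t) − t²/2), extended at 0 by continuity with value 3, is increasing and strictly convex on ℝ. -/

import Mathlib

open Real Filter Set
noncomputable def phiFn (t : ℝ) : ℝ := Real.exp t - 1 - t

noncomputable def upsilon (t : ℝ) : ℝ :=
  if t = 0 then 3 else t * phiFn t / (phiFn t - t ^ 2 / 2)

namespace Ups

/-- denominator -/
noncomputable def aD (t : ℝ) : ℝ := Real.exp t - 1 - t - t^2/2
noncomputable def aDp (t : ℝ) : ℝ := Real.exp t - 1 - t
noncomputable def aN (t : ℝ) : ℝ := t * (Real.exp t - 1 - t)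
noncomputable def aNp (t : ℝ) : ℝ := Real.exp t + t * Real.exp t - 1 - 2*t
noncomputable def aW (t : ℝ) : ℝ :=
  Real.exp t * Real.exp t + Real.exp t * (-2 - 2*t + t^2/2 - t^3/2) + (1 + 2*t + t^2/2)
noncomputable def aWp (t : ℝ) : ℝ :=
  2 * (Real.exp t * Real.exp t) + Real.exp t * (-4 - t - t^2 - t^3/2) + (2 + t)
noncomputable def aU (t : ℝ) : ℝ :=
  Real.exp t * (3 - 3*t + t^2/2) + (-6 + 2*t^2 + t^4/4) + Real.exp (-t) * (3 + 3*t + t^2/2)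
noncomputable def aU1 (t : ℝ) : ℝ := Real.exp t * (t/2 - 2) + (4 + t^2) + Real.exp (-t) * (-2 - t/2)
noncomputable def aU2 (t : ℝ) : ℝ := Real.exp t * (t/2 - 3/2) + 2*t + Real.exp (-t) * (3/2 + t/2)
noncomputable def aU3 (t : ℝ) : ℝ := Real.exp t * (t/2 - 1) + 2 + Real.exp (-t) * (-1 - t/2)
noncomputable def aU4 (t : ℝ) : ℝ := Real.exp t * (t/2 - 1/2) + Real.exp (-t) * (1/2 + t/2)
noncomputable def aU5 (t : ℝ) : ℝ := Real.exp t * (t/2) + Real.exp (-t) * (-t/2)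
noncomputable def aV (t : ℝ) : ℝ :=
  Real.exp t + (-2 - 2*t + t^2/2 - t^3/2) + Real.exp (-t) * (1 + 2*t + t^2/2)
noncomputable def aV1 (t : ℝ) : ℝ :=
  Real.exp t + (-2 + t - 3/2*t^2) + Real.exp (-t) * (1 - t - t^2/2)
noncomputable def aV2 (t : ℝ) : ℝ := Real.exp t + (1 - 3*t) + Real.exp (-t) * (t^2/2 - 2)
noncomputable def aV3 (t : ℝ) : ℝ := Real.exp t + (-3) + Real.exp (-t) * (2 + t - t^2/2)
noncomputable def aV4 (t : ℝ) : ℝ := Real.exp t + Real.exp (-t) * (-1 - 2*t + t^2/2)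
noncomputable def aV5 (t : ℝ) : ℝ := Real.exp t + Real.exp (-t) * (-1 + 3*t - t^2/2)
noncomputable def aV6 (t : ℝ) : ℝ := Real.exp t + Real.exp (-t) * (4 - 4*t + t^2/2)

/-- derivative of a function of the form `exp t * p t + exp (-t) * q t + r t`. -/
lemma hasDerivAt_combo (p q r p' q' r' : ℝ → ℝ) (t : ℝ)
    (hp : HasDerivAt p (p' t) t) (hq : HasDerivAt q (q' t) t) (hr : HasDerivAt r (r' t) t) :
    HasDerivAt (fun s => Real.exp s * p s + Real.exp (-s) * q s + r s)
      (Real.exp t * (p t + p' t) + Real.exp (-t) * (q' t - q t) + r' t) t := by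
  have he : HasDerivAt Real.exp (Real.exp t) t := Real.hasDerivAt_exp t
  have hen : HasDerivAt (fun s : ℝ => Real.exp (-s)) (-Real.exp (-t)) t := by
    exact ((Real.hasDerivAt_exp (-t)).comp t (hasDerivAt_neg t)).congr_deriv (by ring)
  have := ((he.mul hp).add (hen.mul hq)).add hr
  exact this.congr_deriv (by ring)

lemma hasDerivAt_poly (a b c d e : ℝ) (t : ℝ) :
    HasDerivAt (fun s : ℝ => a + b*s + c*s^2 + d*s^3 + e*s^4)
      (b + 2*c*t + 3*d*t^2 + 4*e*t^3) t := by
  have h1 : HasDerivAt (fun s : ℝ => s) 1 t := hasDerivAt_id t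
  have h2 : HasDerivAt (fun s : ℝ => s^2) (2*t) t := by simpa using hasDerivAt_pow 2 t
  have h3 : HasDerivAt (fun s : ℝ => s^3) (3*t^2) t := by simpa using hasDerivAt_pow 3 t
  have h4 : HasDerivAt (fun s : ℝ => s^4) (4*t^3) t := by simpa using hasDerivAt_pow 4 t
  have := (((((hasDerivAt_const t a).add (h1.const_mul b)).add
      (h2.const_mul c)).add (h3.const_mul d)).add (h4.const_mul e))
  exact this.congr_deriv (by ring)

end Ups
namespace Ups

lemma comboPoly (pa pb pc pd pe qa qb qc qd qe ra rb rc rd re : ℝ) (t : ℝ) :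
    HasDerivAt (fun s => Real.exp s * (pa + pb*s + pc*s^2 + pd*s^3 + pe*s^4)
        + Real.exp (-s) * (qa + qb*s + qc*s^2 + qd*s^3 + qe*s^4)
        + (ra + rb*s + rc*s^2 + rd*s^3 + re*s^4))
      (Real.exp t * ((pa + pb*t + pc*t^2 + pd*t^3 + pe*t^4)
          + (pb + 2*pc*t + 3*pd*t^2 + 4*pe*t^3))
        + Real.exp (-t) * ((qb + 2*qc*t + 3*qd*t^2 + 4*qe*t^3)
          - (qa + qb*t + qc*t^2 + qd*t^3 + qe*t^4))
        + (rb + 2*rc*t + 3*rd*t^2 + 4*re*t^3)) t :=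
  hasDerivAt_combo _ _ _
    (fun t => pb + 2*pc*t + 3*pd*t^2 + 4*pe*t^3)
    (fun t => qb + 2*qc*t + 3*qd*t^2 + 4*qe*t^3)
    (fun t => rb + 2*rc*t + 3*rd*t^2 + 4*re*t^3) t
    (hasDerivAt_poly _ _ _ _ _ t) (hasDerivAt_poly _ _ _ _ _ t) (hasDerivAt_poly _ _ _ _ _ t)

lemma hdaV (t : ℝ) : HasDerivAt aV (aV1 t) t := by
  have h := comboPoly (1) (0) (0) (0) (0) (1) (2) (1/2) (0) (0) (-2) (-2) (1/2) (-1/2) (0) t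
  convert h using 1
  · funext s; simp only [aV]; ring
  · simp only [aV1]; ring

lemma hdaV1 (t : ℝ) : HasDerivAt aV1 (aV2 t) t := by
  have h := comboPoly (1) (0) (0) (0) (0) (1) (-1) (-1/2) (0) (0) (-2) (1) (-3/2) (0) (0) t
  convert h using 1
  · funext s; simp only [aV1]; ring
  · simp only [aV2]; ring

lemma hdaV2 (t : ℝ) : HasDerivAt aV2 (aV3 t) t := by
  have h := comboPoly (1) (0) (0) (0) (0) (-2) (0) (1/2) (0) (0) (1) (-3) (0) (0) (0) t
  convert h using 1
  · funext s; simp only [aV2]; ring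
  · simp only [aV3]; ring

lemma hdaV3 (t : ℝ) : HasDerivAt aV3 (aV4 t) t := by
  have h := comboPoly (1) (0) (0) (0) (0) (2) (1) (-1/2) (0) (0) (-3) (0) (0) (0) (0) t
  convert h using 1
  · funext s; simp only [aV3]; ring
  · simp only [aV4]; ring

lemma hdaV4 (t : ℝ) : HasDerivAt aV4 (aV5 t) t := by
  have h := comboPoly (1) (0) (0) (0) (0) (-1) (-2) (1/2) (0) (0) (0) (0) (0) (0) (0) t
  convert h using 1
  · funext s; simp only [aV4]; ring
  · simp only [aV5]; ring

lemma hdaV5 (t : ℝ) : HasDerivAt aV5 (aV6 t) t := by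
  have h := comboPoly (1) (0) (0) (0) (0) (-1) (3) (-1/2) (0) (0) (0) (0) (0) (0) (0) t
  convert h using 1
  · funext s; simp only [aV5]; ring
  · simp only [aV6]; ring

lemma hdaU1 (t : ℝ) : HasDerivAt aU1 (aU2 t) t := by
  have h := comboPoly (-2) (1/2) (0) (0) (0) (-2) (-1/2) (0) (0) (0) (4) (0) (1) (0) (0) t
  convert h using 1
  · funext s; simp only [aU1]; ring
  · simp only [aU2]; ring

lemma hdaU2 (t : ℝ) : HasDerivAt aU2 (aU3 t) t := by
  have h := comboPoly (-3/2) (1/2) (0) (0) (0) (3/2) (1/2) (0) (0) (0) (0) (2) (0) (0) (0) t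
  convert h using 1
  · funext s; simp only [aU2]; ring
  · simp only [aU3]; ring

lemma hdaU3 (t : ℝ) : HasDerivAt aU3 (aU4 t) t := by
  have h := comboPoly (-1) (1/2) (0) (0) (0) (-1) (-1/2) (0) (0) (0) (2) (0) (0) (0) (0) t
  convert h using 1
  · funext s; simp only [aU3]; ring
  · simp only [aU4]; ring

lemma hdaU4 (t : ℝ) : HasDerivAt aU4 (aU5 t) t := by
  have h := comboPoly (-1/2) (1/2) (0) (0) (0) (1/2) (1/2) (0) (0) (0) (0) (0) (0) (0) (0) t
  convert h using 1
  · funext s; simp only [aU4]; ring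
  · simp only [aU5]; ring

lemma hdaU (t : ℝ) : HasDerivAt aU (t * aU1 t) t := by
  have h := comboPoly (3) (-3) (1/2) (0) (0) (3) (3) (1/2) (0) (0) (-6) (0) (2) (0) (1/4) t
  convert h using 1
  · funext s; simp only [aU]; ring
  · simp only [aU1]; ring

lemma hdaV6pos (t : ℝ) : 0 < aV6 t := by
  simp only [aV6]
  rcases le_or_gt t 0 with h | h
  · have h1 : 0 < Real.exp t := Real.exp_pos t
    have h2 : 0 < Real.exp (-t) := Real.exp_pos (-t)
    nlinarith
  · have h2 : 0 < Real.exp (-t) := Real.exp_pos (-t)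
    have h3 : 1 + (2*t) + (2*t)^2/2 ≤ Real.exp (2*t) := by
      have := Real.sum_le_exp_of_nonneg (by linarith : (0:ℝ) ≤ 2*t) 3
      simp [Finset.sum_range_succ, Nat.factorial] at this
      linarith
    have h4 : Real.exp (2*t) = Real.exp t * Real.exp t := by
      rw [← Real.exp_add]; ring_nf
    have h5 : Real.exp t = Real.exp (-t) * (Real.exp t * Real.exp t) := by
      rw [← Real.exp_add, ← Real.exp_add]; ring_nf
    rw [h5]
    have : 0 < Real.exp t * Real.exp t + (4 - 4*t + t^2/2) := by nlinarith [h3, h4]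
    nlinarith

end Ups
namespace Ups

lemma cont_of_deriv {f f' : ℝ → ℝ} (hd : ∀ t, HasDerivAt f (f' t) t) : Continuous f :=
  continuous_iff_continuousAt.mpr fun t => (hd t).continuousAt

lemma sgn_of {f f' : ℝ → ℝ} (hd : ∀ t, HasDerivAt f (f' t) t) (h0 : f 0 = 0)
    (hp : ∀ t, t ≠ 0 → 0 < f' t) :
    (∀ t, 0 < t → 0 < f t) ∧ (∀ t, t < 0 → f t < 0) := by
  have hc := cont_of_deriv hd
  have hmono1 : StrictMonoOn f (Ici 0) := by
    refine strictMonoOn_of_deriv_pos (convex_Ici 0) hc.continuousOn ?_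
    intro x hx
    rw [interior_Ici] at hx
    rw [(hd x).deriv]
    exact hp x (ne_of_gt hx)
  have hmono2 : StrictMonoOn f (Iic 0) := by
    refine strictMonoOn_of_deriv_pos (convex_Iic 0) hc.continuousOn ?_
    intro x hx
    rw [interior_Iic] at hx
    rw [(hd x).deriv]
    exact hp x (ne_of_lt hx)
  constructor
  · intro t ht
    have := hmono1 (self_mem_Ici) (le_of_lt ht) ht
    rwa [h0] at this
  · intro t ht
    have := hmono2 (le_of_lt ht) (self_mem_Iic) ht
    rwa [h0] at this

lemma pos_of {f f' : ℝ → ℝ} (hd : ∀ t, HasDerivAt f (f' t) t) (h0 : f 0 = 0)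
    (hp : ∀ t, 0 < t → 0 < f' t) (hn : ∀ t, t < 0 → f' t < 0) :
    ∀ t, t ≠ 0 → 0 < f t := by
  have hc := cont_of_deriv hd
  have hmono1 : StrictMonoOn f (Ici 0) := by
    refine strictMonoOn_of_deriv_pos (convex_Ici 0) hc.continuousOn ?_
    intro x hx
    rw [interior_Ici] at hx
    rw [(hd x).deriv]
    exact hp x hx
  have hanti : StrictAntiOn f (Iic 0) := by
    refine strictAntiOn_of_deriv_neg (convex_Iic 0) hc.continuousOn ?_
    intro x hx
    rw [interior_Iic] at hx
    rw [(hd x).deriv]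
    exact hn x hx
  intro t ht
  rcases ht.lt_or_gt with h | h
  · have := hanti (le_of_lt h) (self_mem_Iic) h
    rwa [h0] at this
  · have := hmono1 (self_mem_Ici) (le_of_lt h) h
    rwa [h0] at this

lemma aU5_pos : ∀ t : ℝ, t ≠ 0 → 0 < aU5 t := by
  intro t ht
  simp only [aU5]
  rcases ht.lt_or_gt with h | h
  · have : Real.exp t < Real.exp (-t) := Real.exp_lt_exp.mpr (by linarith)
    nlinarith
  · have : Real.exp (-t) < Real.exp t := Real.exp_lt_exp.mpr (by linarith)
    nlinarith

lemma aU4_sgn : (∀ t:ℝ, 0 < t → 0 < aU4 t) ∧ (∀ t:ℝ, t < 0 → aU4 t < 0) := sgn_of hdaU4 (by norm_num [aU4]) aU5_pos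
lemma aU3_pos : ∀ t:ℝ, t ≠ 0 → 0 < aU3 t := pos_of hdaU3 (by norm_num [aU3]) aU4_sgn.1 aU4_sgn.2
lemma aU2_sgn : (∀ t:ℝ, 0 < t → 0 < aU2 t) ∧ (∀ t:ℝ, t < 0 → aU2 t < 0) := sgn_of hdaU2 (by norm_num [aU2]) aU3_pos
lemma aU1_pos : ∀ t:ℝ, t ≠ 0 → 0 < aU1 t := pos_of hdaU1 (by norm_num [aU1]) aU2_sgn.1 aU2_sgn.2
lemma aU_pos : ∀ t : ℝ, t ≠ 0 → 0 < aU t := by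
  refine pos_of hdaU (by norm_num [aU]) ?_ ?_
  · intro t ht; exact mul_pos ht (aU1_pos t (ne_of_gt ht))
  · intro t ht; exact mul_neg_of_neg_of_pos ht (aU1_pos t (ne_of_lt ht))

lemma aV5_sgn : (∀ t:ℝ, 0 < t → 0 < aV5 t) ∧ (∀ t:ℝ, t < 0 → aV5 t < 0) := sgn_of hdaV5 (by norm_num [aV5]) (fun t _ => hdaV6pos t)
lemma aV4_pos : ∀ t:ℝ, t ≠ 0 → 0 < aV4 t := pos_of hdaV4 (by norm_num [aV4]) aV5_sgn.1 aV5_sgn.2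
lemma aV3_sgn : (∀ t:ℝ, 0 < t → 0 < aV3 t) ∧ (∀ t:ℝ, t < 0 → aV3 t < 0) := sgn_of hdaV3 (by norm_num [aV3]) aV4_pos
lemma aV2_pos : ∀ t:ℝ, t ≠ 0 → 0 < aV2 t := pos_of hdaV2 (by norm_num [aV2]) aV3_sgn.1 aV3_sgn.2
lemma aV1_sgn : (∀ t:ℝ, 0 < t → 0 < aV1 t) ∧ (∀ t:ℝ, t < 0 → aV1 t < 0) := sgn_of hdaV1 (by norm_num [aV1]) aV2_pos
lemma aV_pos : ∀ t:ℝ, t ≠ 0 → 0 < aV t := pos_of hdaV (by norm_num [aV]) aV1_sgn.1 aV1_sgn.2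

lemma hdaD (t : ℝ) : HasDerivAt aD (aDp t) t := by
  have h := comboPoly (1) (0) (0) (0) (0) (0) (0) (0) (0) (0) (-1) (-1) (-1/2) (0) (0) t
  convert h using 1
  · funext s; simp only [aD]; ring
  · simp only [aDp]; ring

lemma aDp_pos : ∀ t : ℝ, t ≠ 0 → 0 < aDp t := by
  intro t ht
  have := Real.add_one_lt_exp ht
  simp only [aDp]; linarith

lemma aD_sgn : (∀ t:ℝ, 0 < t → 0 < aD t) ∧ (∀ t:ℝ, t < 0 → aD t < 0) := sgn_of hdaD (by norm_num [aD]) aDp_pos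

lemma aD_ne (t : ℝ) (ht : t ≠ 0) : aD t ≠ 0 := by
  rcases ht.lt_or_gt with h | h
  · exact ne_of_lt (aD_sgn.2 t h)
  · exact ne_of_gt (aD_sgn.1 t h)

lemma aW_pos (t : ℝ) (ht : t ≠ 0) : 0 < aW t := by
  have hv := aV_pos t ht
  have h : aW t = Real.exp t * aV t := by
    simp only [aW, aV, Real.exp_neg]
    have he := Real.exp_ne_zero t
    field_simp
  rw [h]
  exact mul_pos (Real.exp_pos t) hv

end Ups
namespace Ups

noncomputable def aP1 (t : ℝ) : ℝ := (t - 3) * Real.exp t + 3 + 2*t + t^2/2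

lemma exp_taylor5 {t : ℝ} (h : |t| ≤ 1) :
    |Real.exp t - (1 + t + t^2/2 + t^3/6 + t^4/24)| ≤ |t|^5 * (1/100) := by
  have h5 := Real.exp_bound h (by norm_num : 0 < 5)
  have e1 : ∑ m ∈ Finset.range 5, t ^ m / (m.factorial : ℝ)
      = 1 + t + t^2/2 + t^3/6 + t^4/24 := by
    simp [Finset.sum_range_succ, Nat.factorial]
  have e2 : ((5:ℕ).succ : ℝ) / ((5:ℕ).factorial * (5:ℕ)) = 1/100 := by
    norm_num [Nat.factorial]
  rw [e1, e2] at h5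
  exact h5

lemma exp_taylor4 {t : ℝ} (h : |t| ≤ 1) :
    |Real.exp t - (1 + t + t^2/2 + t^3/6)| ≤ |t|^4 * (5/96) := by
  have h5 := Real.exp_bound h (by norm_num : 0 < 4)
  have e1 : ∑ m ∈ Finset.range 4, t ^ m / (m.factorial : ℝ)
      = 1 + t + t^2/2 + t^3/6 := by
    simp [Finset.sum_range_succ, Nat.factorial]
  have e2 : ((4:ℕ).succ : ℝ) / ((4:ℕ).factorial * (4:ℕ)) = 5/96 := by
    norm_num [Nat.factorial]
  rw [e1, e2] at h5
  exact h5

lemma exp_taylor7 {t : ℝ} (h : |t| ≤ 1) :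
    |Real.exp t - (1 + t + t^2/2 + t^3/6 + t^4/24 + t^5/120 + t^6/720)| ≤ |t|^7 * (1/4410) := by
  have h5 := Real.exp_bound h (by norm_num : 0 < 7)
  have e1 : ∑ m ∈ Finset.range 7, t ^ m / (m.factorial : ℝ)
      = 1 + t + t^2/2 + t^3/6 + t^4/24 + t^5/120 + t^6/720 := by
    simp [Finset.sum_range_succ, Nat.factorial]
  have e2 : ((7:ℕ).succ : ℝ) / ((7:ℕ).factorial * (7:ℕ)) = 1/4410 := by
    norm_num [Nat.factorial]
  rw [e1, e2] at h5
  exact h5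

lemma aP1_bound {t : ℝ} (h : |t| ≤ 1) : |aP1 t - t^4/24| ≤ |t|^5 := by
  have h5 := abs_le.mp (exp_taylor5 h)
  have key : aP1 t - t^4/24
      = (t-3) * (Real.exp t - (1 + t + t^2/2 + t^3/6 + t^4/24)) + t^5/24 := by
    simp only [aP1]; ring
  have hab := abs_le.mp h
  have h5a : t^5 ≤ |t|^5 := (le_abs_self _).trans_eq (abs_pow t 5)
  have h5b : -(|t|^5) ≤ t^5 := by
    have := neg_abs_le (t^5); rwa [abs_pow] at this
  have hq := abs_le.mp (show |(t:ℝ) - 3| ≤ 4 by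
    rw [abs_le]; constructor <;> linarith [hab.1, hab.2])
  have hmul : |(t-3) * (Real.exp t - (1 + t + t^2/2 + t^3/6 + t^4/24))| ≤ 4 * (|t|^5 * (1/100)) := by
    rw [abs_mul]
    refine mul_le_mul ?_ (exp_taylor5 h) (abs_nonneg _) (by norm_num)
    rw [abs_le]; constructor <;> linarith [hab.1, hab.2]
  have hm := abs_le.mp hmul
  rw [key, abs_le]
  constructor <;> linarith [hm.1, hm.2, h5a, h5b]

lemma aD_bound {t : ℝ} (h : |t| ≤ 1) : |aD t - t^3/6| ≤ |t|^4 := by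
  have h4 := exp_taylor4 h
  have key : aD t - t^3/6 = Real.exp t - (1 + t + t^2/2 + t^3/6) := by
    simp only [aD]; ring
  rw [key]
  have : (0:ℝ) ≤ |t|^4 := by positivity
  linarith

lemma aW_bound {t : ℝ} (h : |t| ≤ 1/2) : |aW t - t^6/144| ≤ |t|^7 := by
  have h1 : |t| ≤ 1 := by linarith
  have h2t : |2*t| ≤ 1 := by rw [abs_mul, abs_two]; linarith
  have h7 := exp_taylor7 h1
  have h7' := abs_le.mp (exp_taylor7 h2t)
  have hten : |2*t|^7 = 128 * |t|^7 := by rw [abs_mul, abs_two]; ring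
  rw [hten] at h7'
  have he2 : Real.exp t * Real.exp t = Real.exp (2*t) := by
    rw [← Real.exp_add]; ring_nf
  have key : aW t - t^6/144
      = (Real.exp (2*t) - (1 + (2*t) + (2*t)^2/2 + (2*t)^3/6 + (2*t)^4/24 + (2*t)^5/120 + (2*t)^6/720))
        + (-2 - 2*t + t^2/2 - t^3/2) * (Real.exp t - (1 + t + t^2/2 + t^3/6 + t^4/24 + t^5/120 + t^6/720))
        + (-(7/360)*t^7 - (1/288)*t^8 - (1/1440)*t^9) := by
    simp only [aW, ← he2]; ring
  have hab := abs_le.mp h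
  have hq : |-2 - 2*t + t^2/2 - t^3/2| ≤ 4 := by
    rw [abs_le]; constructor <;> nlinarith [hab.1, hab.2]
  have hmul : |(-2 - 2*t + t^2/2 - t^3/2) * (Real.exp t - (1 + t + t^2/2 + t^3/6 + t^4/24 + t^5/120 + t^6/720))|
      ≤ 4 * (|t|^7 * (1/4410)) := by
    rw [abs_mul]
    exact mul_le_mul hq h7 (abs_nonneg _) (by norm_num)
  have hm := abs_le.mp hmul
  have habs : (0:ℝ) ≤ |t| := abs_nonneg t
  have hp8 : |t|^8 ≤ |t|^7 := pow_le_pow_of_le_one habs h1 (by norm_num)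
  have hp9 : |t|^9 ≤ |t|^7 := pow_le_pow_of_le_one habs h1 (by norm_num)
  have e7a : t^7 ≤ |t|^7 := (le_abs_self _).trans_eq (abs_pow t 7)
  have e7b : -(|t|^7) ≤ t^7 := by have := neg_abs_le (t^7); rwa [abs_pow] at this
  have e8a : t^8 ≤ |t|^8 := (le_abs_self _).trans_eq (abs_pow t 8)
  have e8b : -(|t|^8) ≤ t^8 := by have := neg_abs_le (t^8); rwa [abs_pow] at this
  have e9a : t^9 ≤ |t|^9 := (le_abs_self _).trans_eq (abs_pow t 9)
  have e9b : -(|t|^9) ≤ t^9 := by have := neg_abs_le (t^9); rwa [abs_pow] at this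
  rw [key, abs_le]
  constructor <;>
    linarith [hm.1, hm.2, h7'.1, h7'.2, e7a, e7b, e8a, e8b, e9a, e9b, hp8, hp9]

end Ups
open Topology in
lemma _root_.Ups.dummy_open : True := trivial
namespace Ups
open Topology

lemma tendsto_of_bound {g : ℝ → ℝ} {c : ℝ}
    (h : ∀ t : ℝ, t ≠ 0 → |t| ≤ 1/2 → |g t - c| ≤ |t|) :
    Tendsto g (𝓝[≠] (0:ℝ)) (𝓝 c) := by
  have hev : ∀ᶠ t in 𝓝[≠] (0:ℝ), ‖g t - c‖ ≤ |t| := by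
    have hsmall : ∀ᶠ t : ℝ in 𝓝 0, |t| ≤ 1/2 := by
      filter_upwards [Metric.closedBall_mem_nhds (0:ℝ) (by norm_num : (0:ℝ) < 1/2)] with t ht
      simpa [Real.dist_eq] using ht
    filter_upwards [self_mem_nhdsWithin, hsmall.filter_mono nhdsWithin_le_nhds] with t ht hle
    simpa [Real.norm_eq_abs] using h t ht hle
  have habs : Tendsto (fun t : ℝ => |t|) (𝓝[≠] (0:ℝ)) (𝓝 0) := by
    have : Tendsto (fun t : ℝ => |t|) (𝓝 (0:ℝ)) (𝓝 |0|) := continuous_abs.tendsto 0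
    simpa using this.mono_left nhdsWithin_le_nhds
  have h0 := squeeze_zero_norm' hev habs
  have := h0.add_const c
  simpa using this

lemma tendsto_A : Tendsto (fun t => aP1 t / t^4) (𝓝[≠] (0:ℝ)) (𝓝 (1/24)) := by
  apply tendsto_of_bound
  intro t ht hle
  have h1 : |t| ≤ 1 := by linarith
  have ht4 : (0:ℝ) < |t|^4 := by positivity
  have key : aP1 t / t^4 - 1/24 = (aP1 t - t^4/24) / t^4 := by
    field_simp
  rw [key, abs_div, abs_pow, div_le_iff₀ ht4]
  calc |aP1 t - t^4/24| ≤ |t|^5 := aP1_bound h1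
    _ = |t| * |t|^4 := by ring

lemma tendsto_B : Tendsto (fun t => aD t / t^3) (𝓝[≠] (0:ℝ)) (𝓝 (1/6)) := by
  apply tendsto_of_bound
  intro t ht hle
  have h1 : |t| ≤ 1 := by linarith
  have ht3 : (0:ℝ) < |t|^3 := by positivity
  have key : aD t / t^3 - 1/6 = (aD t - t^3/6) / t^3 := by
    field_simp
  rw [key, abs_div, abs_pow, div_le_iff₀ ht3]
  calc |aD t - t^3/6| ≤ |t|^4 := aD_bound h1
    _ = |t| * |t|^3 := by ring

lemma tendsto_C : Tendsto (fun t => aW t / t^6) (𝓝[≠] (0:ℝ)) (𝓝 (1/144)) := by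
  apply tendsto_of_bound
  intro t ht hle
  have ht6 : (0:ℝ) < |t|^6 := by positivity
  have key : aW t / t^6 - 1/144 = (aW t - t^6/144) / t^6 := by
    field_simp
  rw [key, abs_div, abs_pow, div_le_iff₀ ht6]
  calc |aW t - t^6/144| ≤ |t|^7 := aW_bound hle
    _ = |t| * |t|^6 := by ring

lemma upsilon_eq {t : ℝ} (ht : t ≠ 0) : upsilon t = aN t / aD t := by
  have h1 : phiFn t - t^2/2 = aD t := by simp only [phiFn, aD]
  rw [upsilon, if_neg ht, h1]
  rfl

lemma hd_upsilon_zero : HasDerivAt upsilon (1/4) 0 := by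
  rw [hasDerivAt_iff_tendsto_slope]
  have hAB := tendsto_A.div tendsto_B (by norm_num : (1/6 : ℝ) ≠ 0)
  have hval : ((1:ℝ)/24) / (1/6) = 1/4 := by norm_num
  rw [hval] at hAB
  refine hAB.congr' ?_
  filter_upwards [self_mem_nhdsWithin] with t ht
  have ht' : (t:ℝ) ≠ 0 := ht
  have hD := aD_ne t ht'
  rw [slope_def_field, upsilon_eq ht']
  simp only [Pi.div_apply]
  have h0 : upsilon 0 = 3 := by simp [upsilon]
  rw [h0]
  have hP : aP1 t = aN t - 3 * aD t := by simp only [aP1, aN, aD]; ring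
  rw [hP]
  field_simp
  ring

noncomputable def dups (t : ℝ) : ℝ := if t = 0 then 1/4 else aW t / (aD t)^2

lemma hdaN (t : ℝ) : HasDerivAt aN (aNp t) t := by
  have h := comboPoly (0) (1) (0) (0) (0) (0) (0) (0) (0) (0) (0) (-1) (-1) (0) (0) t
  convert h using 1
  · funext s; simp only [aN]; ring
  · simp only [aNp]; ring

lemma hdaW (t : ℝ) : HasDerivAt aW (aWp t) t := by
  have he := Real.hasDerivAt_exp t
  have h := comboPoly (-2) (-2) (1/2) (-1/2) (0) (0) (0) (0) (0) (0) (1) (2) (1/2) (0) (0) t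
  have := (he.mul he).add h
  convert this using 1
  · rfl
  · rfl
  · funext s; simp only [aW, Pi.add_apply, Pi.mul_apply]; ring
  · simp only [aWp]; ring

lemma hd_upsilon : ∀ t : ℝ, HasDerivAt upsilon (dups t) t := by
  intro t
  rcases eq_or_ne t 0 with rfl | ht
  · simpa [dups] using hd_upsilon_zero
  · have hD := aD_ne t ht
    have h1 := (hdaN t).div (hdaD t) hD
    have hev : upsilon =ᶠ[𝓝 t] fun s => aN s / aD s := by
      filter_upwards [isOpen_compl_singleton.mem_nhds (show t ∈ ({(0:ℝ)}ᶜ : Set ℝ) from ht)] with s hs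
      exact upsilon_eq hs
    have h2 := h1.congr_of_eventuallyEq hev
    have hval : (aNp t * aD t - aN t * aDp t) / (aD t)^2 = dups t := by
      simp only [dups, if_neg ht]
      congr 1
      simp only [aNp, aN, aD, aDp, aW]; ring
    rwa [hval] at h2

lemma hd_dups {t : ℝ} (ht : t ≠ 0) :
    HasDerivAt dups (t * Real.exp t * aU t / (aD t)^3) t := by
  have hD := aD_ne t ht
  have hD2 : (aD t)^2 ≠ 0 := pow_ne_zero 2 hD
  have h1 := (hdaW t).div ((hdaD t).pow 2) hD2
  have hev : dups =ᶠ[𝓝 t] fun s => aW s / (aD s)^2 := by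
    filter_upwards [isOpen_compl_singleton.mem_nhds (show t ∈ ({(0:ℝ)}ᶜ : Set ℝ) from ht)] with s hs
    simp only [dups]
    rw [if_neg (show s ≠ 0 from hs)]
  have h2 := h1.congr_of_eventuallyEq hev
  have hval : (aWp t * (aD t)^2 - aW t * ((2:ℕ) * aD t ^ (2-1) * aDp t)) / ((aD t)^2)^2
      = t * Real.exp t * aU t / (aD t)^3 := by
    have hkey : aWp t * aD t - 2 * aW t * aDp t = t * Real.exp t * aU t := by
      simp only [aWp, aD, aW, aDp, aU, Real.exp_neg]
      have he := Real.exp_ne_zero t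
      field_simp
      ring
    have hden : ((aD t)^2)^2 ≠ 0 := pow_ne_zero 2 hD2
    have hD3 : (aD t)^3 ≠ 0 := pow_ne_zero 3 hD
    rw [div_eq_div_iff hden hD3]
    push_cast
    linear_combination (aD t)^4 * hkey
  exact h2.congr_deriv hval

end Ups
namespace Ups
open Topology

lemma dups_zero : dups 0 = 1/4 := by simp [dups]

lemma dups_cont : Continuous dups := by
  rw [continuous_iff_continuousAt]
  intro t
  rcases eq_or_ne t 0 with rfl | ht
  · have hCB := tendsto_C.div (tendsto_B.pow 2) (by norm_num : ((1:ℝ)/6)^2 ≠ 0)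
    have hval : (1/144 : ℝ) / ((1/6)^2) = 1/4 := by norm_num
    rw [hval] at hCB
    have hpun : Tendsto dups (𝓝[≠] (0:ℝ)) (𝓝 (1/4)) := by
      refine hCB.congr' ?_
      filter_upwards [self_mem_nhdsWithin] with s hs
      have hs' : s ≠ 0 := hs
      have hD := aD_ne s hs'
      have hs6 : s^6 ≠ 0 := pow_ne_zero _ hs'
      have hs3 : s^3 ≠ 0 := pow_ne_zero _ hs'
      simp only [Pi.div_apply]
      rw [dups, if_neg hs']
      rw [div_eq_div_iff (by positivity) (pow_ne_zero 2 hD)]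
      field_simp
    rw [ContinuousAt, dups_zero, ← nhdsNE_sup_pure (0:ℝ), tendsto_sup]
    refine ⟨hpun, ?_⟩
    have := tendsto_pure_nhds dups 0
    rwa [dups_zero] at this
  · exact (hd_dups ht).continuousAt

lemma dups_pos (t : ℝ) : 0 < dups t := by
  rcases eq_or_ne t 0 with rfl | ht
  · rw [dups_zero]; norm_num
  · rw [dups, if_neg ht]
    exact div_pos (aW_pos t ht) (pow_two_pos_of_ne_zero (aD_ne t ht))

lemma dups_strictMono : StrictMono dups := by
  have hmono1 : StrictMonoOn dups (Ici 0) := by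
    refine strictMonoOn_of_deriv_pos (convex_Ici 0) dups_cont.continuousOn ?_
    intro x hx
    rw [interior_Ici] at hx
    rw [(hd_dups (ne_of_gt hx)).deriv]
    have hU := aU_pos x (ne_of_gt hx)
    have hDx := aD_sgn.1 x hx
    have : (0:ℝ) < x * Real.exp x * aU x := mul_pos (mul_pos hx (Real.exp_pos x)) hU
    exact div_pos this (pow_pos hDx 3)
  have hmono2 : StrictMonoOn dups (Iic 0) := by
    refine strictMonoOn_of_deriv_pos (convex_Iic 0) dups_cont.continuousOn ?_
    intro x hx
    rw [interior_Iic] at hx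
    rw [(hd_dups (ne_of_lt hx)).deriv]
    have hU := aU_pos x (ne_of_lt hx)
    have hDx := aD_sgn.2 x hx
    have hnum : x * Real.exp x * aU x < 0 := by
      have h1 : x * Real.exp x < 0 := mul_neg_of_neg_of_pos hx (Real.exp_pos x)
      exact mul_neg_of_neg_of_pos h1 hU
    have hden : (aD x)^3 < 0 := by
      have h2 : (aD x)^3 = aD x * (aD x)^2 := by ring
      rw [h2]
      exact mul_neg_of_neg_of_pos hDx (pow_two_pos_of_ne_zero (ne_of_lt hDx))
    exact div_pos_iff.mpr (Or.inr ⟨hnum, hden⟩)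
  intro a b hab
  rcases le_or_gt b 0 with hb | hb
  · exact hmono2 (le_of_lt (lt_of_lt_of_le hab hb)) hb hab
  · rcases le_or_gt 0 a with ha | ha
    · exact hmono1 ha hb.le hab
    · exact lt_trans (hmono2 ha.le self_mem_Iic ha) (hmono1 self_mem_Ici hb.le hb)

end Ups

theorem stmt_3 : Monotone upsilon ∧ StrictConvexOn ℝ Set.univ upsilon := by
  have hder := Ups.hd_upsilon
  have hderiv : deriv upsilon = Ups.dups := funext fun t => (hder t).deriv
  constructor
  · exact (strictMono_of_deriv_pos fun x => by
      rw [hderiv]; exact Ups.dups_pos x).monotone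
  · exact StrictMono.strictConvexOn_univ_of_deriv (Ups.cont_of_deriv hder)
      (hderiv ▸ Ups.dups_strictMono)
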